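/- Let G = (V, E, v₁, V₀, V₁) be a reachability game for player i ∈ {0,1} on a (possibly infinite) arena: V = V₀ ∪ V₁ with V₀, V₁ disjoint, E ⊆ V × V, plays are maximal walks from v₁ (infinite walks, or finite walks ending in a dead end), and player i wins exactly the finite plays ending in a dead end belonging to the opponent's position set, while the opponent wins all other plays (the corresponding safety game). Then exactly one of the two players has a winning strategy, and moreover that player has a positional winning strategy (one whose moves depend only on the current position). -/

import Mathlib

/-
Common formalization of the logics SCL (static computation logic, unbounded
game-theoretic semantics) and BndSCL (bounded semantics), following the paper
"First-order logic with self-reference".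

* Games are played on arbitrary (possibly infinite) arenas; plays are maximal
  walks; strategies are functions from finite walks (histories) to positions;
  infinite plays, and finite plays ending at a dead end where `win` holds for
  neither player, are won by nobody.
* The semantic games are formalized with positions carrying the current
  (sub)formula, an environment binding each label symbol to the labelled
  formula it most recently named (this is the standard closure rendering of
  "reference formula of a claim-symbol occurrence"), the current assignment
  and the polarity (+ = true, − = false).  The bounded game additionally
  carries a clock value.
-/

set_option autoImplicit false

universe u

/-! ## Generic two-player games on (possibly infinite) arenas -/

inductive Player : Type
  | eloise : Player
  | abelard : Player
deriving DecidableEq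

def Player.opp : Player → Player
  | .eloise => .abelard
  | .abelard => .eloise

/-- A game arena: an ownership function (corresponding to the partition
`V = V₀ ∪ V₁`), an edge relation, and a predicate telling which player (if
any) wins a play ending at a given dead-end position. -/
structure GameArena (P : Type u) where
  turn : P → Player
  edge : P → P → Prop
  win : P → Player → Prop

namespace GameArena

variable {P : Type u} (A : GameArena P)

def DeadEnd (u : P) : Prop := ∀ x, ¬ A.edge u x

/-- `w` is a finite nonempty walk whose first element is `v`. -/
def IsWalkFrom (v : P) (w : List P) : Prop :=
  w.head? = some v ∧ List.Chain' A.edge w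

/-- A finite (maximal) play from `v`: a walk whose last element is a dead end. -/
def IsFinitePlay (v : P) (w : List P) : Prop :=
  A.IsWalkFrom v w ∧ ∀ u, w.getLast? = some u → A.DeadEnd u

/-- An infinite play from `v`. -/
def IsInfPlay (v : P) (f : ℕ → P) : Prop :=
  f 0 = v ∧ ∀ n, A.edge (f n) (f (n + 1))

/-- A strategy (a function from histories to positions) of player `pl` is
legal if it always prescribes a move along an edge whenever a move exists. -/
def LegalFor (pl : Player) (v : P) (σ : List P → P) : Prop :=
  ∀ w u, A.IsWalkFrom v w → w.getLast? = some u → A.turn u = pl →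
    (∃ x, A.edge u x) → A.edge u (σ w)

/-- The strategy `σ` of player `pl` is followed in the finite play `w`. -/
def FollowsFin (pl : Player) (σ : List P → P) (w : List P) : Prop :=
  ∀ q u x, (q ++ [x]) <+: w → q.getLast? = some u → A.turn u = pl → x = σ q

/-- The strategy `σ` of player `pl` is followed in the infinite play `f`. -/
def FollowsInf (pl : Player) (σ : List P → P) (f : ℕ → P) : Prop :=
  ∀ n, A.turn (f n) = pl →
    f (n + 1) = σ (List.ofFn fun i : Fin (n + 1) => f i)

/-- `σ` is a winning strategy of player `pl` from `v`: it is legal, every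
finite maximal play following it ends in a dead end won by `pl`, and no
infinite play follows it (infinite plays are won by neither player). -/
def WinningStrategy (pl : Player) (v : P) (σ : List P → P) : Prop :=
  A.LegalFor pl v σ ∧
  (∀ w, A.IsFinitePlay v w → A.FollowsFin pl σ w →
      ∃ u, w.getLast? = some u ∧ A.win u pl) ∧
  (∀ f, A.IsInfPlay v f → ¬ A.FollowsInf pl σ f)

def HasWinningStrategy (pl : Player) (v : P) : Prop :=
  ∃ σ : List P → P, A.WinningStrategy pl v σ

end GameArena

/-- A positional strategy: its moves depend only on the current position. -/
def Positional {P : Type u} (σ : List P → P) : Prop :=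
  ∀ q q' : List P, q.getLast? = q'.getLast? → σ q = σ q'

/-! ## Syntax of SCL / BndSCL -/

/-- A purely relational vocabulary. -/
structure Vocab : Type 1 where
  Rel : Type
  arity : Rel → ℕ

/-- Formulas of SCL / BndSCL over the vocabulary `V`.  Variables and label
symbols are natural numbers; `claim L` is the claim symbol `C_L` and
`lab L φ` is the labelled formula `L φ`. -/
inductive SCLFormula (V : Vocab) : Type
  | bot : SCLFormula V
  | eq (x y : ℕ) : SCLFormula V
  | rel (R : V.Rel) (args : Fin (V.arity R) → ℕ) : SCLFormula V
  | claim (L : ℕ) : SCLFormula V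
  | not (φ : SCLFormula V) : SCLFormula V
  | and (φ ψ : SCLFormula V) : SCLFormula V
  | or (φ ψ : SCLFormula V) : SCLFormula V
  | ex (x : ℕ) (φ : SCLFormula V) : SCLFormula V
  | all (x : ℕ) (φ : SCLFormula V) : SCLFormula V
  | lab (L : ℕ) (φ : SCLFormula V) : SCLFormula V

namespace SCLFormula

variable {V : Vocab}

/-- First-order atoms. -/
def IsFOAtom : SCLFormula V → Prop
  | .bot => True
  | .eq _ _ => True
  | .rel _ _ => True
  | _ => False

/-- Purely first-order formulas (no claim symbols, no label symbols). -/
def IsFO : SCLFormula V → Prop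
  | .bot => True
  | .eq _ _ => True
  | .rel _ _ => True
  | .claim _ => False
  | .not φ => IsFO φ
  | .and φ ψ => IsFO φ ∧ IsFO ψ
  | .or φ ψ => IsFO φ ∧ IsFO ψ
  | .ex _ φ => IsFO φ
  | .all _ φ => IsFO φ
  | .lab _ _ => False

/-- Free (individual) variables. -/
def freeVars : SCLFormula V → Finset ℕ
  | .bot => ∅
  | .eq x y => {x, y}
  | .rel _ a => Finset.image a Finset.univ
  | .claim _ => ∅
  | .not φ => freeVars φ
  | .and φ ψ => freeVars φ ∪ freeVars ψ
  | .or φ ψ => freeVars φ ∪ freeVars ψ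
  | .ex x φ => freeVars φ \ {x}
  | .all x φ => freeVars φ \ {x}
  | .lab _ φ => freeVars φ

/-- All variables occurring in a formula (free or bound). -/
def vars : SCLFormula V → Finset ℕ
  | .bot => ∅
  | .eq x y => {x, y}
  | .rel _ a => Finset.image a Finset.univ
  | .claim _ => ∅
  | .not φ => vars φ
  | .and φ ψ => vars φ ∪ vars ψ
  | .or φ ψ => vars φ ∪ vars ψ
  | .ex x φ => insert x (vars φ)
  | .all x φ => insert x (vars φ)
  | .lab _ φ => vars φ

/-- Sentences: formulas with no free variables. -/
def IsSentence (φ : SCLFormula V) : Prop := freeVars φ = ∅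

end SCLFormula

/-! ## Structures and first-order (Tarski) satisfaction -/

/-- A (suitable) model for vocabulary `V`: a nonempty domain together with an
interpretation of all relation symbols. -/
structure Struct (V : Vocab) where
  Dom : Type u
  dom_nonempty : Nonempty Dom
  interp : ∀ R : V.Rel, (Fin (V.arity R) → Dom) → Prop

attribute [instance] Struct.dom_nonempty

/-- Satisfaction of atoms (false on non-atoms). -/
def atomSat {V : Vocab} (M : Struct.{u} V) (s : ℕ → M.Dom) : SCLFormula V → Prop
  | .bot => False
  | .eq x y => s x = s y
  | .rel R a => M.interp R fun i => s (a i)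
  | _ => False

/-- Standard (Tarski) first-order satisfaction.  It is only meaningful on
purely first-order formulas; claim symbols are interpreted as `False` and
label symbols are ignored. -/
def FOSat {V : Vocab} (M : Struct.{u} V) : (ℕ → M.Dom) → SCLFormula V → Prop
  | _, .bot => False
  | s, .eq x y => s x = s y
  | s, .rel R a => M.interp R fun i => s (a i)
  | _, .claim _ => False
  | s, .not φ => ¬ FOSat M s φ
  | s, .and φ ψ => FOSat M s φ ∧ FOSat M s ψ
  | s, .or φ ψ => FOSat M s φ ∨ FOSat M s ψ
  | s, .ex x φ => ∃ a : M.Dom, FOSat M (Function.update s x a) φ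
  | s, .all x φ => ∀ a : M.Dom, FOSat M (Function.update s x a) φ
  | s, .lab _ φ => FOSat M s φ

/-! ## The evaluation games -/

/-- A position of the semantic game: the current formula, the environment
recording for each label symbol `L` the reference formula `L ψ` it currently
names, the current assignment, and the polarity (`true` = `+`). -/
structure SCLPos (V : Vocab) (D : Type u) : Type u where
  form : SCLFormula V
  env : ℕ → Option (SCLFormula V)
  asg : ℕ → D
  pol : Bool

/-- Which player moves at a given position. (At positions with at most one
successor the owner is irrelevant; we let Eloise own them.) -/
def posTurn {V : Vocab} {D : Type u} (p : SCLPos V D) : Player :=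
  match p.form, p.pol with
  | .and _ _, true => .abelard
  | .and _ _, false => .eloise
  | .or _ _, true => .eloise
  | .or _ _, false => .abelard
  | .all _ _, true => .abelard
  | .all _ _, false => .eloise
  | .ex _ _, true => .eloise
  | .ex _ _, false => .abelard
  | _, _ => .eloise

/-- Who wins a play ending at a given position: at an FO-atom position,
Eloise wins iff the atom's truth value agrees with the polarity, and Abelard
wins otherwise; plays ending anywhere else (e.g. at a claim symbol with no
reference formula, or with clock value 0) are won by neither player. -/
def posWin {V : Vocab} (M : Struct.{u} V) (p : SCLPos V M.Dom) : Player → Prop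
  | .eloise => p.form.IsFOAtom ∧ (atomSat M p.asg p.form ↔ p.pol = true)
  | .abelard => p.form.IsFOAtom ∧ ¬ (atomSat M p.asg p.form ↔ p.pol = true)

/-- Moves of the unbounded evaluation game `G_∞`. -/
inductive UStep {V : Vocab} (M : Struct.{u} V) :
    SCLPos V M.Dom → SCLPos V M.Dom → Prop
  | neg (φ : SCLFormula V) (e : ℕ → Option (SCLFormula V)) (s : ℕ → M.Dom) (b : Bool) :
      UStep M ⟨.not φ, e, s, b⟩ ⟨φ, e, s, !b⟩
  | andLeft (φ ψ : SCLFormula V) (e : ℕ → Option (SCLFormula V)) (s : ℕ → M.Dom) (b : Bool) :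
      UStep M ⟨.and φ ψ, e, s, b⟩ ⟨φ, e, s, b⟩
  | andRight (φ ψ : SCLFormula V) (e : ℕ → Option (SCLFormula V)) (s : ℕ → M.Dom) (b : Bool) :
      UStep M ⟨.and φ ψ, e, s, b⟩ ⟨ψ, e, s, b⟩
  | orLeft (φ ψ : SCLFormula V) (e : ℕ → Option (SCLFormula V)) (s : ℕ → M.Dom) (b : Bool) :
      UStep M ⟨.or φ ψ, e, s, b⟩ ⟨φ, e, s, b⟩
  | orRight (φ ψ : SCLFormula V) (e : ℕ → Option (SCLFormula V)) (s : ℕ → M.Dom) (b : Bool) :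
      UStep M ⟨.or φ ψ, e, s, b⟩ ⟨ψ, e, s, b⟩
  | exStep (x : ℕ) (φ : SCLFormula V) (e : ℕ → Option (SCLFormula V)) (s : ℕ → M.Dom)
      (b : Bool) (a : M.Dom) :
      UStep M ⟨.ex x φ, e, s, b⟩ ⟨φ, e, Function.update s x a, b⟩
  | allStep (x : ℕ) (φ : SCLFormula V) (e : ℕ → Option (SCLFormula V)) (s : ℕ → M.Dom)
      (b : Bool) (a : M.Dom) :
      UStep M ⟨.all x φ, e, s, b⟩ ⟨φ, e, Function.update s x a, b⟩
  | labStep (L : ℕ) (φ : SCLFormula V) (e : ℕ → Option (SCLFormula V)) (s : ℕ → M.Dom)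
      (b : Bool) :
      UStep M ⟨.lab L φ, e, s, b⟩ ⟨φ, Function.update e L (some (.lab L φ)), s, b⟩
  | claimStep (L : ℕ) (e : ℕ → Option (SCLFormula V)) (s : ℕ → M.Dom) (b : Bool)
      (χ : SCLFormula V) (h : e L = some χ) :
      UStep M ⟨.claim L, e, s, b⟩ ⟨χ, e, s, b⟩

/-- Moves of the `n`-bounded evaluation game: positions additionally carry a
clock value, which decreases by one exactly at jumps from a claim symbol to
its reference formula; a claim-symbol position with clock value `0` is a dead
end won by neither player. -/
inductive BStep {V : Vocab} (M : Struct.{u} V) :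
    SCLPos V M.Dom × ℕ → SCLPos V M.Dom × ℕ → Prop
  | neg (φ : SCLFormula V) (e : ℕ → Option (SCLFormula V)) (s : ℕ → M.Dom) (b : Bool) (n : ℕ) :
      BStep M (⟨.not φ, e, s, b⟩, n) (⟨φ, e, s, !b⟩, n)
  | andLeft (φ ψ : SCLFormula V) (e : ℕ → Option (SCLFormula V)) (s : ℕ → M.Dom) (b : Bool)
      (n : ℕ) : BStep M (⟨.and φ ψ, e, s, b⟩, n) (⟨φ, e, s, b⟩, n)
  | andRight (φ ψ : SCLFormula V) (e : ℕ → Option (SCLFormula V)) (s : ℕ → M.Dom) (b : Bool)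
      (n : ℕ) : BStep M (⟨.and φ ψ, e, s, b⟩, n) (⟨ψ, e, s, b⟩, n)
  | orLeft (φ ψ : SCLFormula V) (e : ℕ → Option (SCLFormula V)) (s : ℕ → M.Dom) (b : Bool)
      (n : ℕ) : BStep M (⟨.or φ ψ, e, s, b⟩, n) (⟨φ, e, s, b⟩, n)
  | orRight (φ ψ : SCLFormula V) (e : ℕ → Option (SCLFormula V)) (s : ℕ → M.Dom) (b : Bool)
      (n : ℕ) : BStep M (⟨.or φ ψ, e, s, b⟩, n) (⟨ψ, e, s, b⟩, n)
  | exStep (x : ℕ) (φ : SCLFormula V) (e : ℕ → Option (SCLFormula V)) (s : ℕ → M.Dom)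
      (b : Bool) (n : ℕ) (a : M.Dom) :
      BStep M (⟨.ex x φ, e, s, b⟩, n) (⟨φ, e, Function.update s x a, b⟩, n)
  | allStep (x : ℕ) (φ : SCLFormula V) (e : ℕ → Option (SCLFormula V)) (s : ℕ → M.Dom)
      (b : Bool) (n : ℕ) (a : M.Dom) :
      BStep M (⟨.all x φ, e, s, b⟩, n) (⟨φ, e, Function.update s x a, b⟩, n)
  | labStep (L : ℕ) (φ : SCLFormula V) (e : ℕ → Option (SCLFormula V)) (s : ℕ → M.Dom)
      (b : Bool) (n : ℕ) :
      BStep M (⟨.lab L φ, e, s, b⟩, n) (⟨φ, Function.update e L (some (.lab L φ)), s, b⟩, n)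
  | claimStep (L : ℕ) (e : ℕ → Option (SCLFormula V)) (s : ℕ → M.Dom) (b : Bool)
      (χ : SCLFormula V) (n : ℕ) (h : e L = some χ) :
      BStep M (⟨.claim L, e, s, b⟩, n + 1) (⟨χ, e, s, b⟩, n)

/-- The unbounded evaluation game `G_∞(𝔄, ·, ·)` as a game arena. -/
def gameU {V : Vocab} (M : Struct.{u} V) : GameArena (SCLPos V M.Dom) where
  turn := posTurn
  edge := UStep M
  win := posWin M

/-- The bounded evaluation games `G_n(𝔄, ·, ·)` (for all clock values `n`
simultaneously) as a game arena. -/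
def gameB {V : Vocab} (M : Struct.{u} V) : GameArena (SCLPos V M.Dom × ℕ) where
  turn p := posTurn p.1
  edge := BStep M
  win p := posWin M p.1

/-- The initial position of the evaluation game for `φ` under assignment `s`:
empty environment and positive polarity. -/
def initPos {V : Vocab} {D : Type u} (φ : SCLFormula V) (s : ℕ → D) : SCLPos V D :=
  ⟨φ, fun _ => none, s, true⟩

/-- Truth under the unbounded semantics (the logic SCL):
`𝔄,s ⊨ φ` iff Eloise has a winning strategy in `G_∞(𝔄,s,φ)`. -/
def SCLTrue {V : Vocab} (M : Struct.{u} V) (s : ℕ → M.Dom) (φ : SCLFormula V) : Prop :=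
  (gameU M).HasWinningStrategy .eloise (initPos φ s)

/-! ### The bounded game `G_ω` -/

/-- Positions of the game `G_ω`: the initial position (where Abelard picks a
number `n'`), the intermediate positions (where Eloise picks some `n ≥ n'`),
and the positions of the `n`-bounded games. -/
inductive GOPos (V : Vocab) (D : Type u) : Type u
  | start : GOPos V D
  | mid (n' : ℕ) : GOPos V D
  | inner (p : SCLPos V D) (clock : ℕ) : GOPos V D

inductive GOStep {V : Vocab} (M : Struct.{u} V) (φ : SCLFormula V) (s : ℕ → M.Dom) :
    GOPos V M.Dom → GOPos V M.Dom → Prop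
  | abelardPick (n' : ℕ) : GOStep M φ s .start (.mid n')
  | eloisePick (n' n : ℕ) (h : n' ≤ n) : GOStep M φ s (.mid n') (.inner (initPos φ s) n)
  | play (p q : SCLPos V M.Dom) (m k : ℕ) (h : BStep M (p, m) (q, k)) :
      GOStep M φ s (.inner p m) (.inner q k)

def goTurn {V : Vocab} {D : Type u} : GOPos V D → Player
  | .start => .abelard
  | .mid _ => .eloise
  | .inner p _ => posTurn p

def goWin {V : Vocab} (M : Struct.{u} V) : GOPos V M.Dom → Player → Prop
  | .inner p _, pl => posWin M p pl
  | _, _ => False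

/-- The bounded evaluation game `G_ω(𝔄,s,φ)`: Abelard picks `n' ∈ ℕ`, then
Eloise picks `n ≥ n'`, and then `G_n(𝔄,s,φ)` is played. -/
def gameOmega {V : Vocab} (M : Struct.{u} V) (φ : SCLFormula V) (s : ℕ → M.Dom) :
    GameArena (GOPos V M.Dom) where
  turn := goTurn
  edge := GOStep M φ s
  win := goWin M

/-- Truth under the bounded semantics (the logic BndSCL):
`𝔄,s ⊨_ω φ` iff Eloise has a winning strategy in `G_ω(𝔄,s,φ)`. -/
def BndTrue {V : Vocab} (M : Struct.{u} V) (s : ℕ → M.Dom) (φ : SCLFormula V) : Prop :=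
  (gameOmega M φ s).HasWinningStrategy .eloise .start

/-! ## Approximants -/

/-- Auxiliary structural recursion for approximants: `k` tells what to put in
place of a claim symbol.  Label symbols are deleted (while updating the
environment), and polarity is tracked through negations. -/
def approxCore {V : Vocab}
    (k : (ℕ → Option (SCLFormula V)) → Bool → ℕ → SCLFormula V) :
    (ℕ → Option (SCLFormula V)) → Bool → SCLFormula V → SCLFormula V
  | _, _, .bot => .bot
  | _, _, .eq x y => .eq x y
  | _, _, .rel R a => .rel R a
  | e, b, .claim L => k e b L
  | e, b, .not φ => .not (approxCore k e (!b) φ)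
  | e, b, .and φ ψ => .and (approxCore k e b φ) (approxCore k e b ψ)
  | e, b, .or φ ψ => .or (approxCore k e b φ) (approxCore k e b ψ)
  | e, b, .ex x φ => .ex x (approxCore k e b φ)
  | e, b, .all x φ => .all x (approxCore k e b φ)
  | e, b, .lab L φ => approxCore k (Function.update e L (some (.lab L φ))) b φ

/-- `approx n e b φ` unfolds each claim symbol of `φ` (in environment `e`,
under polarity `b`) through `n` jumps to reference formulas; claim symbols
reached with exhausted budget (or with no reference formula) are replaced by
`⊥` at positive occurrences and `⊤` (i.e. `¬⊥`) at negative occurrences, and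
all label symbols are deleted. -/
def approx {V : Vocab} : ℕ → (ℕ → Option (SCLFormula V)) → Bool → SCLFormula V → SCLFormula V
  | 0 => approxCore fun _ b _ => if b then .bot else .not .bot
  | n + 1 => approxCore fun e b L =>
      match e L with
      | some χ => approx n e b χ
      | none => if b then .bot else .not .bot

/-- The `n`-th approximant `Φⁿ_φ` of `φ`: the first-order formula obtained
from the `n`-th unfolding of `φ` by deleting all label symbols and replacing
positive claim occurrences by `⊥` and negative ones by `⊤`. -/
def approximant {V : Vocab} (φ : SCLFormula V) (n : ℕ) : SCLFormula V :=
  approx n (fun _ => none) true φ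

/-! ## STATEMENT 0: positional determinacy of reachability/safety games -/

namespace GameArena

variable {P : Type u} (A : GameArena P)

/-- A winning strategy of the reachability player `i` from `v`: every maximal
play following it is finite and ends in a dead end belonging to the opponent
(in particular, no infinite play follows it). -/
def ReachWS (i : Player) (v : P) (σ : List P → P) : Prop :=
  A.LegalFor i v σ ∧
  (∀ w, A.IsFinitePlay v w → A.FollowsFin i σ w →
      ∃ u, w.getLast? = some u ∧ A.turn u = i.opp) ∧
  (∀ f, A.IsInfPlay v f → ¬ A.FollowsInf i σ f)

/-- A winning strategy of the safety player (the opponent of `i`) from `v`: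
the opponent wins all infinite plays and all finite plays ending in a dead end
belonging to `i`, so the strategy only has to guarantee that every finite
maximal play following it ends in a position of `i`. -/
def SafetyWS (i : Player) (v : P) (σ : List P → P) : Prop :=
  A.LegalFor i.opp v σ ∧
  (∀ w, A.IsFinitePlay v w → A.FollowsFin i.opp σ w →
      ∃ u, w.getLast? = some u ∧ A.turn u = i)

end GameArena

/-!
The winning region of player `i` is its attractor of the opponent's dead ends, built by
transfinite induction. Inside it, `i` moves to a position of smaller rank and every opponent move
also lowers the rank, so the play is finite and ends at a dead end of the opponent. Outside it,
every move of `i` stays outside and the opponent always has a move staying outside, so every dead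
end reached belongs to `i`. Both strategies look only at the current position.
-/

namespace Player

theorem opp_ne (i : Player) : i.opp ≠ i := by
  cases i <;> decide

theorem eq_opp_of_ne {p i : Player} (h : p ≠ i) : p = i.opp := by
  cases p <;> cases i <;> first | exact absurd rfl h | rfl

end Player

namespace GameArena

variable {P : Type u} (A : GameArena P)

section Outcome

variable (m : List P → P) (v : P)

/-- The history after `n` moves when every move is made by `m`. -/
def outcomePrefix : ℕ → List P
  | 0 => [v]
  | n + 1 => outcomePrefix n ++ [m (outcomePrefix n)]

def outcome : ℕ → P
  | 0 => v
  | n + 1 => m (outcomePrefix m v n)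

theorem outcomePrefix_eq_ofFn (n : ℕ) :
    outcomePrefix m v n = List.ofFn fun j : Fin (n + 1) => outcome m v j := by
  induction n with
  | zero => rfl
  | succ n ih =>
    rw [List.ofFn_succ', List.concat_eq_append]
    simp only [Fin.val_castSucc, Fin.val_last, ← ih]
    rfl

theorem getLast?_outcomePrefix (n : ℕ) :
    (outcomePrefix m v n).getLast? = some (outcome m v n) := by
  cases n <;> simp [outcomePrefix, outcome]

variable {A m v}

theorem isWalkFrom_outcomePrefix (hm : ∀ pl, A.LegalFor pl v m) {n : ℕ}
    (hlive : ∀ k < n, ∃ x, A.edge (outcome m v k) x) :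
    A.IsWalkFrom v (outcomePrefix m v n) := by
  induction n with
  | zero => exact ⟨rfl, List.IsChain.singleton v⟩
  | succ n ih =>
    have hw := ih fun k hk => hlive k (by omega)
    refine ⟨by simp [outcomePrefix, hw.1], List.IsChain.append hw.2 (.singleton _) ?_⟩
    rintro x hx y ⟨⟩
    rw [getLast?_outcomePrefix, Option.mem_some_iff] at hx
    subst hx
    exact hm _ _ _ hw (getLast?_outcomePrefix m v n) rfl (hlive n (by omega))

theorem isInfPlay_outcome (hm : ∀ pl, A.LegalFor pl v m)
    (hlive : ∀ n, ∃ x, A.edge (outcome m v n) x) : A.IsInfPlay v (outcome m v) :=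
  ⟨rfl, fun n => hm _ _ _ (isWalkFrom_outcomePrefix hm fun k _ => hlive k)
    (getLast?_outcomePrefix m v n) rfl (hlive n)⟩

theorem exists_isFinitePlay_outcomePrefix (hm : ∀ pl, A.LegalFor pl v m)
    (hdead : ¬ ∀ n, ∃ x, A.edge (outcome m v n) x) :
    ∃ n, A.IsFinitePlay v (outcomePrefix m v n) := by
  classical
  push Not at hdead
  refine ⟨Nat.find hdead, isWalkFrom_outcomePrefix hm fun k hk => ?_, ?_⟩
  · by_contra h
    push Not at h
    exact Nat.find_min hdead hk h
  · rintro u hu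
    rw [getLast?_outcomePrefix, Option.some_inj] at hu
    exact hu ▸ Nat.find_spec hdead

theorem followsFin_outcomePrefix {pl : Player} {σ : List P → P}
    (hσ : ∀ q u, q.getLast? = some u → A.turn u = pl → m q = σ q) (n : ℕ) :
    A.FollowsFin pl σ (outcomePrefix m v n) := by
  induction n with
  | zero =>
    rintro q u x hpre hu -
    obtain rfl : q = [] := by simpa [outcomePrefix] using hpre.length_le
    simp at hu
  | succ n ih =>
    rintro q u x hpre hu ht
    rcases List.prefix_concat_iff.mp hpre with heq | hpre
    · obtain ⟨rfl, hx⟩ := List.append_inj' heq rfl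
      simp only [List.cons.injEq, and_true] at hx
      rw [hx, hσ _ u hu ht]
    · exact ih q u x hpre hu ht

theorem followsInf_outcome {pl : Player} {σ : List P → P}
    (hσ : ∀ q u, q.getLast? = some u → A.turn u = pl → m q = σ q) :
    A.FollowsInf pl σ (outcome m v) := fun n ht => by
  rw [← outcomePrefix_eq_ofFn]
  exact hσ _ _ (getLast?_outcomePrefix m v n) ht

end Outcome

section Memoryless

def memoryless (d : P) (c : P → P) (w : List P) : P :=
  w.getLast?.elim d c

theorem positional_memoryless (d : P) (c : P → P) : Positional (memoryless d c) :=
  fun q q' h => by simp only [memoryless, h]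

theorem memoryless_of_getLast? {d u : P} {c : P → P} {w : List P} (h : w.getLast? = some u) :
    memoryless d c w = c u := by
  simp [memoryless, h]

variable {A}

theorem legalFor_memoryless {c : P → P} (hc : ∀ u, (∃ x, A.edge u x) → A.edge u (c u))
    (pl : Player) (v d : P) : A.LegalFor pl v (memoryless d c) :=
  fun _ u _ hu _ hex => memoryless_of_getLast? hu ▸ hc u hex

theorem isChain_of_followsFin_memoryless {pl : Player} {d : P} {c : P → P} {w : List P}
    (hw : w.IsChain A.edge) (hf : A.FollowsFin pl (memoryless d c) w) :
    w.IsChain fun u x => A.edge u x ∧ (A.turn u = pl → x = c u) := by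
  induction w using List.reverseRecOn with
  | nil => exact .nil
  | append_singleton l x ih =>
    obtain ⟨hl, -, hlx⟩ := List.isChain_append.mp hw
    refine List.IsChain.append (ih hl fun q u y hpre => hf q u y (hpre.trans (l.prefix_append _)))
      (.singleton x) fun u hu y hy => ?_
    obtain rfl : y = x := by simpa using hy.symm
    exact ⟨hlx u hu y rfl, fun ht =>
      (hf l u y List.prefix_rfl hu ht).trans (memoryless_of_getLast? hu)⟩

theorem mem_of_followsFin_memoryless {pl : Player} {d v u : P} {c : P → P} {w : List P}
    {Q : Set P} (hQ : ∀ u x, u ∈ Q → A.edge u x → (A.turn u = pl → x = c u) → x ∈ Q)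
    (hv : v ∈ Q) (hw : A.IsWalkFrom v w) (hf : A.FollowsFin pl (memoryless d c) w)
    (hu : w.getLast? = some u) : u ∈ Q := by
  refine (isChain_of_followsFin_memoryless hw.2 hf).induction (· ∈ Q) w
    (fun u x h hu => hQ u x hu h.1 h.2) (fun hne => ?_) u (List.mem_of_getLast? hu)
  rwa [Option.some_inj.mp ((List.head?_eq_some_head hne).symm.trans hw.1)]

noncomputable def preferredMove (good : P → P → Prop) (u : P) : P :=
  open Classical in
  if h : ∃ x, A.edge u x ∧ good u x then h.choose
  else if h : ∃ x, A.edge u x then h.choose else u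

variable {good : P → P → Prop} {u : P}

theorem edge_preferredMove (h : ∃ x, A.edge u x) : A.edge u (A.preferredMove good u) := by
  unfold preferredMove
  split_ifs with h'
  · exact h'.choose_spec.1
  · exact h.choose_spec

theorem preferredMove_spec (h : ∃ x, A.edge u x ∧ good u x) :
    good u (A.preferredMove good u) := by
  unfold preferredMove
  rw [dif_pos h]
  exact h.choose_spec.2

end Memoryless

section Attractor

variable (i : Player)

/-- `A.InAttractor i u o`: from `u`, player `i` can force a dead end of the opponent, with `o`
bounding the rank of `u` in the transfinite construction of the attractor. -/
inductive InAttractor : P → Ordinal.{u} → Prop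
  | dead {u : P} {o : Ordinal.{u}} : A.turn u = i.opp → A.DeadEnd u → InAttractor u o
  | own {u x : P} {o o' : Ordinal.{u}} :
      A.turn u = i → A.edge u x → o' < o → InAttractor x o' → InAttractor u o
  | opponent {u : P} {o : Ordinal.{u}} (g : P → Ordinal.{u}) :
      A.turn u = i.opp → (∃ x, A.edge u x) → (∀ x, A.edge u x → g x < o) →
      (∀ x, A.edge u x → InAttractor x (g x)) → InAttractor u o

def attractor : Set P := {u | ∃ o, A.InAttractor i u o}

noncomputable def attractorRank (u : P) : Ordinal.{u} := sInf {o | A.InAttractor i u o}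

variable {A i} {u x : P}

theorem inAttractor_attractorRank (hu : u ∈ A.attractor i) :
    A.InAttractor i u (A.attractorRank i u) :=
  csInf_mem hu

theorem attractorRank_le {o : Ordinal.{u}} (h : A.InAttractor i u o) : A.attractorRank i u ≤ o :=
  csInf_le' h

theorem exists_edge_attractorRank_lt (hu : u ∈ A.attractor i) (ht : A.turn u = i) :
    ∃ x, A.edge u x ∧ x ∈ A.attractor i ∧ A.attractorRank i x < A.attractorRank i u := by
  cases inAttractor_attractorRank hu with
  | dead ht' _ => exact absurd (ht'.symm.trans ht) i.opp_ne
  | own _ he hlt hx => exact ⟨_, he, ⟨_, hx⟩, (attractorRank_le hx).trans_lt hlt⟩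
  | opponent _ ht' _ _ _ => exact absurd (ht'.symm.trans ht) i.opp_ne

theorem attractorRank_lt_of_edge (hu : u ∈ A.attractor i) (ht : A.turn u = i.opp)
    (he : A.edge u x) : x ∈ A.attractor i ∧ A.attractorRank i x < A.attractorRank i u := by
  cases inAttractor_attractorRank hu with
  | dead _ hd => exact absurd he (hd x)
  | own ht' _ _ _ => exact absurd (ht.symm.trans ht') i.opp_ne
  | opponent g _ _ hlt hx =>
    exact ⟨⟨_, hx x he⟩, (attractorRank_le (hx x he)).trans_lt (hlt x he)⟩

theorem turn_eq_opp_of_mem_attractor (hu : u ∈ A.attractor i) (hd : A.DeadEnd u) :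
    A.turn u = i.opp := by
  cases inAttractor_attractorRank hu with
  | dead ht _ => exact ht
  | own _ he _ _ => exact absurd he (hd _)
  | opponent _ _ hex _ _ => exact absurd hex.choose_spec (hd _)

theorem turn_eq_of_notMem_attractor (hu : u ∉ A.attractor i) (hd : A.DeadEnd u) :
    A.turn u = i := by
  by_contra ht
  exact hu ⟨0, .dead (Player.eq_opp_of_ne ht) hd⟩

theorem notMem_attractor_of_edge (hu : u ∉ A.attractor i) (ht : A.turn u = i)
    (he : A.edge u x) : x ∉ A.attractor i :=
  fun ⟨o, hx⟩ => hu ⟨o + 1, .own ht he (Order.lt_succ o) hx⟩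

theorem exists_edge_notMem_attractor (hu : u ∉ A.attractor i) (ht : A.turn u = i.opp)
    (hex : ∃ x, A.edge u x) : ∃ x, A.edge u x ∧ x ∉ A.attractor i := by
  by_contra! h
  let g (x : P) : Ordinal.{u} := A.attractorRank i x
  have hbdd : BddAbove (Set.range fun x : {x // A.edge u x} => g x) := Ordinal.bddAbove_of_small
  refine hu ⟨(⨆ x : {x // A.edge u x}, g x) + 1, .opponent g ht hex (fun x hx => ?_)
    fun x hx => inAttractor_attractorRank (h x hx)⟩
  exact (le_ciSup hbdd ⟨x, hx⟩).trans_lt (Order.lt_succ _)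

end Attractor

section Strategies

variable {A} {i : Player} {u x v : P}

theorem exists_getLast?_of_isWalkFrom {w : List P} (hw : A.IsWalkFrom v w) :
    ∃ u, w.getLast? = some u := by
  cases w with
  | nil => cases hw.1
  | cons a l => exact ⟨_, List.getLast?_eq_some_getLast (List.cons_ne_nil a l)⟩

theorem eq_of_followsInf_memoryless {pl : Player} {d : P} {c : P → P} {f : ℕ → P}
    (hf : A.FollowsInf pl (memoryless d c) f) {n : ℕ} (ht : A.turn (f n) = pl) :
    f (n + 1) = c (f n) :=
  (hf n ht).trans <| memoryless_of_getLast? <| by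
    rw [List.ofFn_succ', List.concat_eq_append, List.getLast?_concat]
    rfl

variable (A i)

noncomputable def reachMove : P → P :=
  A.preferredMove fun u x => x ∈ A.attractor i ∧ A.attractorRank i x < A.attractorRank i u

noncomputable def safetyMove : P → P :=
  A.preferredMove fun _ x => x ∉ A.attractor i

variable {A i}

theorem attractor_step (hu : u ∈ A.attractor i) (he : A.edge u x)
    (hx : A.turn u = i → x = A.reachMove i u) :
    x ∈ A.attractor i ∧ A.attractorRank i x < A.attractorRank i u := by
  by_cases ht : A.turn u = i
  · rw [hx ht]
    exact A.preferredMove_spec (good := fun u x => x ∈ A.attractor i ∧ _)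
      (exists_edge_attractorRank_lt hu ht)
  · exact attractorRank_lt_of_edge hu (Player.eq_opp_of_ne ht) he

theorem notMem_attractor_step (hu : u ∉ A.attractor i) (he : A.edge u x)
    (hx : A.turn u = i.opp → x = A.safetyMove i u) : x ∉ A.attractor i := by
  by_cases ht : A.turn u = i
  · exact notMem_attractor_of_edge hu ht he
  · have ht' := Player.eq_opp_of_ne ht
    rw [hx ht']
    exact A.preferredMove_spec (good := fun _ x => x ∉ A.attractor i)
      (exists_edge_notMem_attractor hu ht' ⟨x, he⟩)

theorem reachWS_memoryless_reachMove (hv : v ∈ A.attractor i) :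
    A.ReachWS i v (memoryless v (A.reachMove i)) := by
  refine ⟨legalFor_memoryless (fun _ => A.edge_preferredMove) _ _ _, fun w hw hf => ?_,
    fun f hf hfol => ?_⟩
  · obtain ⟨u, hu⟩ := exists_getLast?_of_isWalkFrom hw.1
    have hmem : u ∈ A.attractor i :=
      mem_of_followsFin_memoryless (fun _ _ hu he hx => (attractor_step hu he hx).1) hv hw.1 hf hu
    exact ⟨u, hu, turn_eq_opp_of_mem_attractor hmem (hw.2 u hu)⟩
  · have hstep (n : ℕ) (hn : f n ∈ A.attractor i) :=
      attractor_step hn (hf.2 n) (eq_of_followsInf_memoryless hfol)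
    have hmem (n : ℕ) : f n ∈ A.attractor i := by
      induction n with
      | zero => exact hf.1 ▸ hv
      | succ n ih => exact (hstep n ih).1
    exact (RelEmbedding.natGT _ fun n => (hstep n (hmem n)).2).not_wellFounded wellFounded_lt

theorem safetyWS_memoryless_safetyMove (hv : v ∉ A.attractor i) :
    A.SafetyWS i v (memoryless v (A.safetyMove i)) := by
  refine ⟨legalFor_memoryless (fun _ => A.edge_preferredMove) _ _ _, fun w hw hf => ?_⟩
  obtain ⟨u, hu⟩ := exists_getLast?_of_isWalkFrom hw.1
  have hmem : u ∈ (A.attractor i)ᶜ :=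
    mem_of_followsFin_memoryless (fun _ _ hu he hx => notMem_attractor_step hu he hx) hv hw.1 hf hu
  exact ⟨u, hu, turn_eq_of_notMem_attractor hmem (hw.2 u hu)⟩

/-- Playing `σ` against `τ` yields a play violating one of the two winning conditions. -/
theorem not_reachWS_and_safetyWS {σ τ : List P → P} (hσ : A.ReachWS i v σ)
    (hτ : A.SafetyWS i v τ) : False := by
  classical
  let m (w : List P) : P := if w.getLast?.map A.turn = some i then σ w else τ w
  have hmσ (q : List P) (u : P) (hu : q.getLast? = some u) (ht : A.turn u = i) : m q = σ q :=
    if_pos (by simp [hu, ht])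
  have hmτ (q : List P) (u : P) (hu : q.getLast? = some u) (ht : A.turn u = i.opp) : m q = τ q :=
    if_neg (by simp [hu, ht, i.opp_ne])
  have hm (pl : Player) : A.LegalFor pl v m := fun w u hw hu _ hex => by
    by_cases ht : A.turn u = i
    · rw [hmσ w u hu ht]
      exact hσ.1 w u hw hu ht hex
    · have ht' := Player.eq_opp_of_ne ht
      rw [hmτ w u hu ht']
      exact hτ.1 w u hw hu ht' hex
  by_cases hlive : ∀ n, ∃ x, A.edge (outcome m v n) x
  · exact hσ.2.2 _ (isInfPlay_outcome hm hlive) (followsInf_outcome hmσ)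
  · obtain ⟨n, hn⟩ := exists_isFinitePlay_outcomePrefix hm hlive
    obtain ⟨u, hu, hopp⟩ := hσ.2.1 _ hn (followsFin_outcomePrefix hmσ n)
    obtain ⟨u', hu', hi⟩ := hτ.2 _ hn (followsFin_outcomePrefix hmτ n)
    obtain rfl : u' = u := Option.some_inj.mp (hu'.symm.trans hu)
    exact i.opp_ne (hopp.symm.trans hi)

end Strategies

end GameArena

/-- In a reachability game for player `i` on an arbitrary
(possibly infinite) arena — where the opponent plays the corresponding safety
game — exactly one of the two players has a winning strategy, and moreover
that player has a positional winning strategy. -/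
theorem reachability_safety_games_positionally_determined
    {P : Type u} (A : GameArena P) (i : Player) (v : P) :
    ((∃ σ, A.ReachWS i v σ) ↔ ¬ ∃ σ, A.SafetyWS i v σ) ∧
    ((∃ σ, A.ReachWS i v σ) → ∃ σ, A.ReachWS i v σ ∧ Positional σ) ∧
    ((∃ σ, A.SafetyWS i v σ) → ∃ σ, A.SafetyWS i v σ ∧ Positional σ) := by
  have hexcl {σ τ : List P → P} (hσ : A.ReachWS i v σ) (hτ : A.SafetyWS i v τ) : False :=
    GameArena.not_reachWS_and_safetyWS hσ hτ
  by_cases hv : v ∈ A.attractor i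
  · have hσ := GameArena.reachWS_memoryless_reachMove hv
    have hpos := GameArena.positional_memoryless v (A.reachMove i)
    exact ⟨⟨fun _ ⟨_, hτ⟩ => hexcl hσ hτ, fun _ => ⟨_, hσ⟩⟩,
      fun _ => ⟨_, hσ, hpos⟩,
      fun ⟨_, hτ⟩ => (hexcl hσ hτ).elim⟩
  · have hτ := GameArena.safetyWS_memoryless_safetyMove hv
    have hpos := GameArena.positional_memoryless v (A.safetyMove i)
    exact ⟨⟨fun ⟨_, hσ⟩ => (hexcl hσ hτ).elim, fun h => (h ⟨_, hτ⟩).elim⟩,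
      fun ⟨_, hσ⟩ => (hexcl hσ hτ).elim, fun _ => ⟨_, hτ, hpos⟩⟩
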